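/- The functions f₊ and f₋ are mutually inverse: for any 2×2 complex matrix ((x,y),(z,w)) with z ≠ 0 and any real h with h ∉ ℤ (and such that all denominators appearing are nonzero), f₋(f₊(((x,y),(z,w)), h)) = (((x,y),(z,w)), h), where f₊(((x,y),(z,w)), h) = ( (( (w + h(x−240))/(h+1), 1/z ), ( ((h+1)²(h−2)yz − (x−w+120(h−1))² + 746496(h+1)²)/((h+2)(h+1)²)·z, (x + h(w+240))/(h+1) )), h+2 ) and f₋(((x,y),(z,w)), h) = ( (( (−w + (h−2)(x+240))/(h−3), (h(h−3)²yz + (x−w+120(h−1))² − 746496(h−3)²)/((h−4)(h−3)²)·y ), ( 1/y, (−x + (h−2)(w−240))/(h−3) )), h−2 ). -/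
import Mathlib


noncomputable def fplus : (ℂ × ℂ × ℂ × ℂ) × ℝ → (ℂ × ℂ × ℂ × ℂ) × ℝ :=
  fun p =>
    let x := p.1.1
    let y := p.1.2.1
    let z := p.1.2.2.1
    let w := p.1.2.2.2
    let h : ℂ := (p.2 : ℝ)
    (((w + h * (x - 240)) / (h + 1),
      1 / z,
      ((h + 1) ^ 2 * (h - 2) * y * z - (x - w + 120 * (h - 1)) ^ 2 +
          746496 * (h + 1) ^ 2) / ((h + 2) * (h + 1) ^ 2) * z,
      (x + h * (w + 240)) / (h + 1)),
     p.2 + 2)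

noncomputable def fminus : (ℂ × ℂ × ℂ × ℂ) × ℝ → (ℂ × ℂ × ℂ × ℂ) × ℝ :=
  fun p =>
    let x := p.1.1
    let y := p.1.2.1
    let z := p.1.2.2.1
    let w := p.1.2.2.2
    let h : ℂ := (p.2 : ℝ)
    (((-w + (h - 2) * (x + 240)) / (h - 3),
      (h * (h - 3) ^ 2 * y * z + (x - w + 120 * (h - 1)) ^ 2 -
          746496 * (h - 3) ^ 2) / ((h - 4) * (h - 3) ^ 2) * y,
      1 / y,
      (-x + (h - 2) * (w - 240)) / (h - 3)),
     p.2 - 2)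

private lemma canc (a b z : ℂ) (hz : z ≠ 0) : a * (1 / z) * (b * z) = a * b := by
  field_simp

theorem stmt_6 (x y z w : ℂ) (h : ℝ) (hz : z ≠ 0) (hh : ∀ m : ℤ, h ≠ (m : ℝ)) :
    fminus (fplus ((x, y, z, w), h)) = ((x, y, z, w), h) := by
  have key : ∀ m : ℤ, (h : ℂ) + (m : ℂ) ≠ 0 := by
    intro m hm
    apply hh (-m)
    have : (h : ℂ) = ((-m : ℤ) : ℂ) := by push_cast; linear_combination hm
    exact_mod_cast this
  have h1 : (h : ℂ) + 1 ≠ 0 := by simpa using key 1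
  have h2 : (h : ℂ) + 2 ≠ 0 := by simpa using key 2
  have hm1 : (h : ℂ) - 1 ≠ 0 := by
    have := key (-1); push_cast at this; simpa [sub_eq_add_neg] using this
  have hm2 : (h : ℂ) - 2 ≠ 0 := by
    have := key (-2); push_cast at this; simpa [sub_eq_add_neg] using this
  have h3 : ((h : ℂ) + 2) - 3 ≠ 0 := fun hc => hm1 (by linear_combination hc)
  have h4 : ((h : ℂ) + 2) - 4 ≠ 0 := fun hc => hm2 (by linear_combination hc)
  have hD : (((h : ℂ) + 2) - 4) * (((h : ℂ) + 2) - 3) ^ 2 ≠ 0 :=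
    mul_ne_zero h4 (pow_ne_zero _ h3)
  simp only [fplus, fminus, Prod.mk.injEq]
  push_cast
  refine ⟨⟨?_, ?_, ?_, ?_⟩, by ring⟩
  · rw [div_eq_iff h3]
    field_simp [h1, h2, h3, h4, hz]
    ring
  · rw [canc _ _ _ hz, div_mul_eq_mul_div, div_eq_iff hD]
    field_simp [h1, h2, h3, h4, hz]
    ring
  · simp [one_div_one_div, hz]
  · rw [div_eq_iff h3]
    field_simp [h1, h2, h3, h4, hz]
    ring
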